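/- Let G and H be finitely generated groups with G nontrivial, and let H act on a set X with finitely many orbits. If the wreath product G ≀_X H has property FW, then X is finite. -/

import Mathlib

/-- The group of finitely supported functions `X → G` (pointwise multiplication). -/
def FinSupp (G X : Type*) [Group G] : Subgroup (X → G) where
  carrier := {φ | (Function.mulSupport φ).Finite}
  one_mem' := by simp [Function.mulSupport_one]
  mul_mem' := by
    intro a b ha hb
    exact ((ha.union hb).subset (Function.mulSupport_mul a b))
  inv_mem' := by
    intro a ha
    simpa [Function.mulSupport_inv] using ha

/-- The automorphism of `FinSupp G X` given by `h : H`, `(h.φ)(x) = φ(h⁻¹ • x)`. -/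
def wreathAut (G H X : Type*) [Group G] [Group H] [MulAction H X] (h : H) :
    FinSupp G X ≃* FinSupp G X where
  toFun φ := ⟨fun x => φ.1 (h⁻¹ • x), by
    have hsub : Function.mulSupport (fun x => φ.1 (h⁻¹ • x)) ⊆
        (fun x => h⁻¹ • x) ⁻¹' Function.mulSupport φ.1 := fun x hx => hx
    exact (φ.2.preimage ((MulAction.injective (h⁻¹ : H)).injOn)).subset hsub⟩
  invFun φ := ⟨fun x => φ.1 (h • x), by
    have hsub : Function.mulSupport (fun x => φ.1 (h • x)) ⊆
        (fun x => h • x) ⁻¹' Function.mulSupport φ.1 := fun x hx => hx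
    exact (φ.2.preimage ((MulAction.injective h).injOn)).subset hsub⟩
  left_inv φ := by ext x; simp
  right_inv φ := by ext x; simp
  map_mul' φ ψ := rfl

/-- The action of `H` on `FinSupp G X` by automorphisms. -/
def wreathAction (G H X : Type*) [Group G] [Group H] [MulAction H X] :
    H →* MulAut (FinSupp G X) where
  toFun := wreathAut G H X
  map_one' := by
    ext φ x
    simp [wreathAut]
  map_mul' a b := by
    ext φ x
    simp [wreathAut, mul_smul]

/-- The restricted wreath product `G ≀_X H`. -/
abbrev Wreath (G H X : Type*) [Group G] [Group H] [MulAction H X] :=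
  FinSupp G X ⋊[wreathAction G H X] H

open scoped Classical in
/-- The function `δ_x^s` sending `x` to `s` and everything else to `1`. -/
noncomputable def deltaFn {G X : Type*} [Group G] (x : X) (s : G) : FinSupp G X :=
  ⟨fun y => if y = x then s else 1, (Set.finite_singleton x).subset (by
    intro y hy
    simp only [Function.mem_mulSupport] at hy
    by_contra hxy
    simp only [Set.mem_singleton_iff] at hxy
    simp [hxy] at hy)⟩

open scoped Classical in
/-- The number of ends of a graph: the supremum over finite vertex sets `K` of the
number of infinite connected components of the induced subgraph on the complement of `K`. -/
noncomputable def numEnds {V : Type*} (Γ : SimpleGraph V) : ℕ∞ :=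
  ⨆ K : Finset V,
    {C : (SimpleGraph.induce ((↑K : Set V)ᶜ) Γ).ConnectedComponent | C.supp.Infinite}.encard

/-- The orbital graph of an action of `G` on `X` with respect to `S ⊆ G`:
vertices `X`, an edge between `x` and `s • x` for each `s ∈ S`. -/
def orbitalGraph (G : Type*) [Group G] (S : Set G) (X : Type*) [MulAction G X] :
    SimpleGraph X where
  Adj x y := x ≠ y ∧ ∃ s ∈ S, (s • x = y ∨ s • y = x)
  symm := by
    constructor; rintro x y ⟨h, s, hs, h'⟩
    exact ⟨h.symm, s, hs, h'.symm⟩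
  loopless := by constructor; rintro x ⟨h, -⟩; exact h rfl

/-- The Schreier graph `Sch(G, H; S)`: vertices the left cosets `G ⧸ H`,
an edge between `gH` and `sgH` for each `s ∈ S`. -/
def schreierGraph (G : Type*) [Group G] (S : Set G) (H : Subgroup G) :
    SimpleGraph (G ⧸ H) where
  Adj x y := x ≠ y ∧ ∃ s ∈ S, ∃ g : G,
      (((g : G ⧸ H) = x ∧ ((s * g : G) : G ⧸ H) = y)) ∨
      (((g : G ⧸ H) = y ∧ ((s * g : G) : G ⧸ H) = x))
  symm := by
    constructor; rintro x y ⟨h, s, hs, g, hg⟩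
    exact ⟨h.symm, s, hs, g, hg.symm⟩
  loopless := by constructor; rintro x ⟨h, -⟩; exact h rfl

/-- The Cayley graph of `G` with respect to `S`. -/
def cayleyGraph (G : Type*) [Group G] (S : Set G) : SimpleGraph G :=
  orbitalGraph G S G

/-- `S` is a finite symmetric generating set of `G`. -/
def IsSymmGen {G : Type*} [Group G] (S : Finset G) : Prop :=
  (∀ s ∈ S, s⁻¹ ∈ S) ∧ Subgroup.closure (S : Set G) = ⊤

/-- A group has property FW if all of its Schreier graphs with respect to a finite
symmetric generating set have at most one end. -/
def HasFW (G : Type*) [Group G] : Prop :=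
  ∀ S : Finset G, IsSymmGen S → ∀ L : Subgroup G, numEnds (schreierGraph G (↑S) L) ≤ 1

/-!
The wreath product acts on `X × G` by `(f, h) • (x, g) = (h • x, f (h • x) * g)`. Pick `x₀` in an
infinite `H`-orbit; the Schreier graph of the stabiliser of `(x₀, 1)` is the orbital graph on
`H x₀ × G`. Take as generators the `inr t` for `t` in a generating set of `H`, which move only the
`X`-coordinate, and the `inl (deltaFn c u)` for `u` in a generating set of `G` and `c` in a finite
set `C` meeting every orbit, which change the `G`-coordinate only above `c`. Once the finitely many
vertices `(c, 1)`, `c ∈ C`, are removed, level `1` can no longer be left, while level `s₀ ≠ 1` stays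
connected. These are two infinite components, hence at least two ends, contradicting FW.
-/

open SemidirectProduct MulAction

namespace SimpleGraph

variable {V W : Type*}

lemma Reachable.map_of_adj_or_eq {Γ : SimpleGraph V} {Γ' : SimpleGraph W} (f : V → W)
    (hf : ∀ ⦃a b⦄, Γ.Adj a b → f a = f b ∨ Γ'.Adj (f a) (f b)) {a b : V}
    (h : Γ.Reachable a b) : Γ'.Reachable (f a) (f b) := by
  rw [reachable_iff_reflTransGen] at h ⊢
  refine h.lift' f fun x y hxy => ?_
  rcases hf hxy with heq | hadj
  · simp only [Function.onFun, heq, Relation.ReflTransGen.refl]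
  · exact .single hadj

lemma ConnectedComponent.supp_subset_of_adj_closed {Γ : SimpleGraph V} {D : Set V}
    (hD : ∀ ⦃u v⦄, u ∈ D → Γ.Adj u v → v ∈ D) {v : V} (hv : v ∈ D) :
    (Γ.connectedComponentMk v).supp ⊆ D := by
  intro u hu
  have h := (reachable_iff_reflTransGen v u).mp (ConnectedComponent.eq.mp hu).symm
  clear hu
  induction h with
  | refl => exact hv
  | tail _ hadj ih => exact hD ih hadj

lemma one_lt_numEnds {Γ : SimpleGraph V} (K : Finset V)
    {C₁ C₂ : (Γ.induce (K : Set V)ᶜ).ConnectedComponent} (hne : C₁ ≠ C₂)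
    (h₁ : C₁.supp.Infinite) (h₂ : C₂.supp.Infinite) : 1 < numEnds Γ :=
  (Set.one_lt_encard_iff.mpr ⟨C₁, C₂, h₁, h₂, hne⟩).trans_le
    (le_iSup (fun K : Finset V =>
      {C : (Γ.induce (K : Set V)ᶜ).ConnectedComponent | C.supp.Infinite}.encard) K)

theorem one_lt_numEnds_of_adj_closed {Γ : SimpleGraph V} [Γ.LocallyFinite]
    (hΓ : Γ.Preconnected) (K : Finset V) {D C : Set ↥(K : Set V)ᶜ} (hD : D.Infinite)
    (hDclosed : ∀ ⦃u v⦄, u ∈ D → (Γ.induce (K : Set V)ᶜ).Adj u v → v ∈ D)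
    (hC : C.Infinite) (hCconn : ∀ u ∈ C, ∀ v ∈ C, (Γ.induce (K : Set V)ᶜ).Reachable u v)
    (hCD : Disjoint C D) : 1 < numEnds Γ := by
  have : Fact Γ.Preconnected := ⟨hΓ⟩
  obtain ⟨C₁, hC₁⟩ :
      ∃ C₁ : (Γ.induce (K : Set V)ᶜ).ConnectedComponent, (C₁.supp ∩ D).Infinite := by
    by_contra! h
    exact hD ((Set.finite_iUnion h).subset fun v hv => Set.mem_iUnion.mpr ⟨_, rfl, hv⟩)
  obtain ⟨c, hc⟩ := hC.nonempty
  obtain ⟨d, hd₁, hd⟩ := hC₁.nonempty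
  have hC₁D : C₁.supp ⊆ D := by
    rw [← (ConnectedComponent.mem_supp_iff _ _).mp hd₁]
    exact ConnectedComponent.supp_subset_of_adj_closed hDclosed hd
  refine one_lt_numEnds K (C₂ := (Γ.induce _).connectedComponentMk c) (fun h => ?_)
    (hC₁.mono Set.inter_subset_left) (hC.mono fun v hv => ?_)
  · exact Set.disjoint_left.mp hCD hc (hC₁D (h ▸ rfl))
  · exact ConnectedComponent.eq.mpr (hCconn v hv c hc)

end SimpleGraph

section OrbitalGraph

variable {Γ α : Type*} [Group Γ] [MulAction Γ α]

lemma schreierGraph_eq_orbitalGraph (S : Set Γ) (L : Subgroup Γ) :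
    schreierGraph Γ S L = orbitalGraph Γ S (Γ ⧸ L) := by
  ext x y
  refine and_congr_right fun _ => exists_congr fun s => and_congr_right fun _ => ?_
  constructor
  · rintro ⟨g, ⟨rfl, rfl⟩ | ⟨rfl, rfl⟩⟩
    · exact Or.inl rfl
    · exact Or.inr rfl
  · obtain ⟨g, rfl⟩ := QuotientGroup.mk_surjective x
    obtain ⟨g', rfl⟩ := QuotientGroup.mk_surjective y
    rintro (h | h)
    · exact ⟨g, Or.inl ⟨rfl, h⟩⟩
    · exact ⟨g', Or.inr ⟨rfl, h⟩⟩

variable {S : Set Γ}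

lemma orbitalGraph_smul_eq_or_adj {s : Γ} (hs : s ∈ S) (x : α) :
    s • x = x ∨ (orbitalGraph Γ S α).Adj x (s • x) :=
  or_iff_not_imp_left.mpr fun h => ⟨Ne.symm h, s, hs, Or.inl rfl⟩

lemma orbitalGraph_induce_eq_or_adj {A : Set α} {s : Γ} (hs : s ∈ S) {x y : A}
    (hxy : s • (x : α) = y) : x = y ∨ ((orbitalGraph Γ S α).induce A).Adj x y := by
  rcases orbitalGraph_smul_eq_or_adj hs (x : α) with h | h
  · exact Or.inl (Subtype.ext (h.symm.trans hxy))
  · exact Or.inr (SimpleGraph.induce_adj.mpr (hxy ▸ h))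

lemma orbitalGraph_reachable_smul {g : Γ} (hg : g ∈ Subgroup.closure S) (x : α) :
    (orbitalGraph Γ S α).Reachable x (g • x) := by
  induction hg using Subgroup.closure_induction_left with
  | one => rw [one_smul]
  | mul_left s hs g _ ih =>
    rw [mul_smul]
    rcases orbitalGraph_smul_eq_or_adj hs (g • x) with h | h
    · rwa [h]
    · exact ih.trans h.reachable
  | inv_mul_cancel s hs g _ ih =>
    rw [mul_smul]
    rcases orbitalGraph_smul_eq_or_adj hs (s⁻¹ • g • x) with h | h
    · rw [smul_inv_smul] at h
      rwa [← h]
    · rw [smul_inv_smul] at h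
      exact ih.trans h.symm.reachable

lemma orbitalGraph_preconnected [IsPretransitive Γ α] (hS : Subgroup.closure S = ⊤) :
    (orbitalGraph Γ S α).Preconnected := fun x y => by
  obtain ⟨g, rfl⟩ := exists_smul_eq Γ x y
  exact orbitalGraph_reachable_smul (hS ▸ Subgroup.mem_top g) x

lemma orbitalGraph_neighborSet_subset (x : α) :
    (orbitalGraph Γ S α).neighborSet x ⊆ (· • x) '' S ∪ (fun s => s⁻¹ • x) '' S := by
  rintro y ⟨-, s, hs, rfl | rfl⟩
  · exact Or.inl ⟨s, hs, rfl⟩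
  · exact Or.inr ⟨s, hs, inv_smul_smul s y⟩

noncomputable instance (S : Finset Γ) : (orbitalGraph Γ S α).LocallyFinite := fun x =>
  (((S.finite_toSet.image _).union (S.finite_toSet.image _)).subset
    (orbitalGraph_neighborSet_subset x)).fintype

end OrbitalGraph

section DeltaFn

variable {G X : Type*} [Group G]

lemma deltaFn_apply_self (x : X) (s : G) : (deltaFn x s : X → G) x = s := by
  simp [deltaFn]

lemma deltaFn_apply_of_ne {x y : X} (h : y ≠ x) (s : G) : (deltaFn x s : X → G) y = 1 := by
  simp [deltaFn, h]

noncomputable def deltaHom (x : X) : G →* FinSupp G X where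
  toFun := deltaFn x
  map_one' := by ext y; by_cases h : y = x <;> simp [deltaFn, h]
  map_mul' a b := by ext y; by_cases h : y = x <;> simp [deltaFn, h]

lemma FinSupp.mem_of_forall_deltaFn_mem {M : Subgroup (FinSupp G X)}
    (hM : ∀ x g, deltaFn x g ∈ M) (f : FinSupp G X) : f ∈ M := by
  classical
  suffices ∀ s : Finset X, ∀ f : FinSupp G X, Function.mulSupport (f : X → G) ⊆ s → f ∈ M from
    this f.2.toFinset f f.2.coe_toFinset.symm.subset
  intro s
  induction s using Finset.induction_on with
  | empty =>
    intro f hf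
    convert M.one_mem
    ext y
    simpa using fun h => hf h
  | insert x s _ ih =>
    intro f hf
    let f' : FinSupp G X := ⟨Function.update f x 1, by
      show (Function.mulSupport _).Finite
      rw [Function.mulSupport_update_one]; exact f.2.sdiff⟩
    have hf' : f = deltaFn x ((f : X → G) x) * f' := by
      ext y
      by_cases hy : y = x
      · simp [f', hy, deltaFn_apply_self]
      · simp [f', hy, deltaFn_apply_of_ne]
    rw [hf']
    refine mul_mem (hM _ _) (ih f' ?_)
    rw [Function.mulSupport_update_one, Set.sdiff_subset_iff]
    simpa using hf

lemma wreathAction_deltaFn {H : Type*} [Group H] [MulAction H X] (h : H) (x : X) (s : G) :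
    wreathAction G H X h (deltaFn x s) = deltaFn (h • x) s := by
  ext y
  change (deltaFn x s : X → G) (h⁻¹ • y) = _
  by_cases hy : y = h • x
  · simp [hy, deltaFn_apply_self]
  · rw [deltaFn_apply_of_ne hy, deltaFn_apply_of_ne fun h' => hy (by rw [← h', smul_inv_smul])]

end DeltaFn

namespace Wreath

variable {G H X : Type*} [Group G] [Group H] [MulAction H X]

instance : MulAction (Wreath G H X) (X × G) where
  smul w p := (w.right • p.1, (w.left : X → G) (w.right • p.1) * p.2)
  one_smul p := Prod.ext (one_smul H p.1) (one_mul p.2)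
  mul_smul a b p := by
    refine Prod.ext (mul_smul _ _ _) ?_
    change ((a.left * wreathAction G H X a.right b.left : FinSupp G X) : X → G)
        ((a.right * b.right) • p.1) * p.2 =
      (a.left : X → G) (a.right • b.right • p.1) * ((b.left : X → G) (b.right • p.1) * p.2)
    simp [wreathAction, wreathAut, mul_smul, mul_assoc]

lemma smul_def (w : Wreath G H X) (p : X × G) :
    w • p = (w.right • p.1, (w.left : X → G) (w.right • p.1) * p.2) := rfl

@[simp]
lemma inl_smul (f : FinSupp G X) (p : X × G) :
    (inl f : Wreath G H X) • p = (p.1, (f : X → G) p.1 * p.2) := by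
  simp [smul_def]

@[simp]
lemma inr_smul (h : H) (p : X × G) : (inr h : Wreath G H X) • p = (h • p.1, p.2) := by
  simp [smul_def]

open scoped Classical in
noncomputable def generators (T : Finset H) (U : Finset G) (C : Finset X) :
    Finset (Wreath G H X) :=
  T.image inr ∪ (C ×ˢ U).image fun p => inl (deltaFn p.1 p.2)

variable {T : Finset H} {U : Finset G} {C : Finset X}

lemma mem_generators {s : Wreath G H X} :
    s ∈ generators T U C ↔ (∃ t ∈ T, inr t = s) ∨ ∃ c ∈ C, ∃ u ∈ U, inl (deltaFn c u) = s := by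
  simp [generators, and_assoc]

lemma inr_mem_generators {t : H} (ht : t ∈ T) : inr t ∈ generators T U C :=
  mem_generators.mpr (Or.inl ⟨t, ht, rfl⟩)

lemma closure_generators (hT : Subgroup.closure (T : Set H) = ⊤)
    (hU : Subgroup.closure (U : Set G) = ⊤) (hC : ∀ x, ∃ c ∈ C, x ∈ orbit H c) :
    Subgroup.closure (generators T U C : Set (Wreath G H X)) = ⊤ := by
  set M := Subgroup.closure (generators T U C : Set (Wreath G H X))
  have inr_mem (h : H) : inr h ∈ M :=
    (Subgroup.closure_le (M.comap inr)).mpr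
      (fun t ht => Subgroup.subset_closure (inr_mem_generators ht)) (hT ▸ Subgroup.mem_top h)
  have inl_deltaFn_mem (c : X) (hc : c ∈ C) (g : G) : inl (deltaFn c g) ∈ M :=
    (Subgroup.closure_le (M.comap (inl.comp (deltaHom c)))).mpr
      (fun u hu => Subgroup.subset_closure (mem_generators.mpr (Or.inr ⟨c, hc, u, hu, rfl⟩)))
      (hU ▸ Subgroup.mem_top g)
  have inl_mem (f : FinSupp G X) : inl f ∈ M := by
    refine FinSupp.mem_of_forall_deltaFn_mem (M := M.comap inl) (fun x g => ?_) f
    obtain ⟨c, hc, h, rfl⟩ := hC x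
    rw [Subgroup.mem_comap, ← wreathAction_deltaFn, inl_aut]
    exact mul_mem (mul_mem (inr_mem h) (inl_deltaFn_mem c hc g)) (inr_mem h⁻¹)
  refine eq_top_iff.mpr fun w _ => ?_
  rw [← inl_left_mul_inr_right w]
  exact mul_mem (inl_mem _) (inr_mem _)

lemma isSymmGen_generators (hT : IsSymmGen T) (hU : IsSymmGen U)
    (hC : ∀ x, ∃ c ∈ C, x ∈ orbit H c) : IsSymmGen (generators T U C) := by
  refine ⟨fun s hs => ?_, closure_generators hT.2 hU.2 hC⟩
  rcases mem_generators.mp hs with ⟨t, ht, rfl⟩ | ⟨c, hc, u, hu, rfl⟩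
  · rw [← map_inv]
    exact inr_mem_generators (hT.1 t ht)
  · rw [← map_inv, show (deltaFn c u)⁻¹ = deltaFn c u⁻¹ from (map_inv (deltaHom c) u).symm]
    exact mem_generators.mpr (Or.inr ⟨c, hc, u⁻¹, hU.1 u hu, rfl⟩)

lemma fst_mem_of_snd_smul_ne {s : Wreath G H X} (hs : s ∈ generators T U C) {p : X × G}
    (hp : (s • p).2 ≠ p.2) : p.1 ∈ C ∧ (s • p).1 = p.1 := by
  rcases mem_generators.mp hs with ⟨t, -, rfl⟩ | ⟨c, hc, u, -, rfl⟩
  · simp at hp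
  · refine ⟨by_contra fun hp₁ => hp ?_, by simp⟩
    simp [deltaFn_apply_of_ne (ne_of_mem_of_not_mem hc hp₁).symm]

lemma snd_eq_of_orbitalGraph_adj {α : Type*} [MulAction (Wreath G H X) α]
    (E : α →[Wreath G H X] X × G) {u v : α}
    (hadj : (orbitalGraph (Wreath G H X) (generators T U C) α).Adj u v)
    (hu : (E u).1 ∉ C) : (E v).2 = (E u).2 := by
  obtain ⟨-, s, hs, rfl | rfl⟩ := hadj
  · rw [map_smul]
    by_contra h
    exact hu (fst_mem_of_snd_smul_ne hs h).1
  · rw [map_smul] at hu ⊢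
    by_contra h
    obtain ⟨hmem, hfst⟩ := fst_mem_of_snd_smul_ne hs (Ne.symm h)
    exact hu (hfst ▸ hmem)

theorem one_lt_numEnds_schreierGraph_stabilizer [Nontrivial G]
    (hT : Subgroup.closure (T : Set H) = ⊤)
    (hS : Subgroup.closure (generators T U C : Set (Wreath G H X)) = ⊤)
    {x₀ : X} (hx₀ : (orbit H x₀).Infinite) :
    1 < numEnds (schreierGraph (Wreath G H X) (generators T U C)
      (stabilizer (Wreath G H X) (x₀, (1 : G)))) := by
  set L := stabilizer (Wreath G H X) (x₀, (1 : G))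
  let E : Wreath G H X ⧸ L →[Wreath G H X] X × G :=
    ⟨ofQuotientStabilizer _ (x₀, 1), ofQuotientStabilizer_smul _ (x₀, 1)⟩
  have E_mk (w : Wreath G H X) : E w = w • (x₀, 1) := rfl
  have hKfin : (E ⁻¹' (↑C ×ˢ {1})).Finite :=
    (C.finite_toSet.prod (Set.finite_singleton 1)).preimage
      (injective_ofQuotientStabilizer _ _).injOn
  set K := hKfin.toFinset
  have mem_K (v) : v ∈ (K : Set _) ↔ (E v).1 ∈ C ∧ (E v).2 = 1 := by simp [K]
  obtain ⟨s₀, hs₀⟩ := exists_ne (1 : G)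
  have E_slice (h : H) : E (inr h * inl (deltaFn x₀ s₀) : Wreath G H X) = (h • x₀, s₀) := by
    simp [E_mk, mul_smul, deltaFn_apply_self]
  let slice (h : H) : ↥(K : Set (Wreath G H X ⧸ L))ᶜ :=
    ⟨(inr h * inl (deltaFn x₀ s₀) : Wreath G H X),
      fun hK => hs₀ (by simpa [E_slice] using ((mem_K _).mp hK).2)⟩
  let π (v : ↥(K : Set (Wreath G H X ⧸ L))ᶜ) : X := (E v).1
  rw [schreierGraph_eq_orbitalGraph]
  refine SimpleGraph.one_lt_numEnds_of_adj_closed (orbitalGraph_preconnected hS) K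
    (D := {v | (E v).2 = 1}) (C := Set.range slice) ?_ ?_ ?_ ?_ ?_
  · refine Set.Infinite.of_image π ((hx₀.sdiff C.finite_toSet).mono ?_)
    rintro _ ⟨⟨h, rfl⟩, hC⟩
    have E_inr : E (inr h : Wreath G H X) = (h • x₀, 1) := by simp [E_mk]
    refine ⟨⟨(inr h : Wreath G H X), fun hK => hC ?_⟩, by simp [E_inr], by simp [π, E_inr]⟩
    simpa [E_inr] using ((mem_K _).mp hK).1
  · intro u v hu hadj
    exact (snd_eq_of_orbitalGraph_adj E (SimpleGraph.induce_adj.mp hadj)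
      fun hC => u.2 ((mem_K _).mpr ⟨hC, hu⟩)).trans hu
  · refine Set.Infinite.of_image π ?_
    rw [← Set.range_comp]
    convert hx₀
    ext h
    simp [π, slice, E_slice, mem_orbit_iff]
  · rintro _ ⟨h, rfl⟩ _ ⟨h', rfl⟩
    have hcay : (cayleyGraph H T).Preconnected := orbitalGraph_preconnected hT
    refine (hcay h h').map_of_adj_or_eq slice ?_
    have slice_mul (t a : H) : (inr t : Wreath G H X) • (slice a : Wreath G H X ⧸ L) =
        slice (t * a) := by
      simp [slice, MulAction.Quotient.smul_mk, mul_assoc]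
    rintro a b ⟨-, t, ht, rfl | rfl⟩
    · exact orbitalGraph_induce_eq_or_adj (inr_mem_generators ht) (slice_mul t a)
    · exact (orbitalGraph_induce_eq_or_adj (inr_mem_generators ht) (slice_mul t b)).imp
        Eq.symm SimpleGraph.Adj.symm
  · refine Set.disjoint_left.mpr ?_
    rintro _ ⟨h, rfl⟩ hD
    exact hs₀ (by simpa [slice, E_slice] using hD)

end Wreath

open Pointwise in
lemma Group.FG.exists_isSymmGen {G : Type*} [Group G] (hG : Group.FG G) :
    ∃ S : Finset G, IsSymmGen S := by
  classical
  obtain ⟨S, hS⟩ := hG.out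
  refine ⟨S ∪ S⁻¹, fun s hs => ?_, eq_top_iff.mpr (hS ▸ Subgroup.closure_mono (by simp))⟩
  simpa [or_comm] using hs

namespace MulAction

variable (H X : Type*) [Group H] [MulAction H X] [Finite (orbitRel.Quotient H X)]

lemma exists_infinite_orbit [Infinite X] : ∃ x : X, (orbit H x).Infinite := by
  obtain ⟨q, hq⟩ := Finite.exists_infinite_fiber (Quotient.mk (orbitRel H X))
  refine ⟨q.out, ?_⟩
  rw [← orbitRel.Quotient.orbit_eq_orbit_out q Quotient.out_eq']
  convert Set.infinite_coe_iff.mp hq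
  ext x
  exact orbitRel.Quotient.mem_orbit

lemma exists_finset_forall_mem_orbit : ∃ C : Finset X, ∀ x, ∃ c ∈ C, x ∈ orbit H c :=
  ⟨(Set.finite_range (Quotient.out : orbitRel.Quotient H X → X)).toFinset, fun x =>
    ⟨(Quotient.mk (orbitRel H X) x).out, by simp,
      orbitRel_apply.mp ((orbitRel H X).symm (Quotient.mk_out (s := orbitRel H X) x))⟩⟩

end MulAction

/-- If `G` and `H` are finitely generated, `G` is nontrivial, `H` acts on `X` with
finitely many orbits and `G ≀_X H` has property FW, then `X` is finite. -/
theorem stmt18 {G H X : Type*} [Group G] [Group H] [MulAction H X] [Nontrivial G]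
    (hG : Group.FG G) (hH : Group.FG H)
    (horb : Finite (Quotient (MulAction.orbitRel H X)))
    (hFW : HasFW (Wreath G H X)) : Finite X := by
  by_contra hX
  have : Infinite X := not_finite_iff_infinite.mp hX
  obtain ⟨x₀, hx₀⟩ := MulAction.exists_infinite_orbit H X
  obtain ⟨T, hT⟩ := hH.exists_isSymmGen
  obtain ⟨U, hU⟩ := hG.exists_isSymmGen
  obtain ⟨C, hC⟩ := MulAction.exists_finset_forall_mem_orbit H X
  have hS := Wreath.isSymmGen_generators hT hU hC
  exact (hFW _ hS _).not_gt (Wreath.one_lt_numEnds_schreierGraph_stabilizer hT.2 hS.2 hx₀)
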